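/- For a C¹ purely vectorial function f = f₁i + f₂j + f₃k : Ω → ℍ(ℂ), the right equation Dψ^θ[f] = 0 holds if and only if the left equation ψ^θD[f] = 0 holds; i.e., for vector fields, left- and right-ψ^θ-hyperholomorphicity coincide, both being equivalent to the generalized Laplacian system. -/

import Mathlib

noncomputable section

def iC : Quaternion ℂ := ⟨0, 1, 0, 0⟩
def jC : Quaternion ℂ := ⟨0, 0, 1, 0⟩
def kC : Quaternion ℂ := ⟨0, 0, 0, 1⟩

/-- The quaternion `e^{iθ} = cos θ + (sin θ) i`, viewed in `ℍ(ℂ)`. -/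
def eC (θ : ℝ) : Quaternion ℂ := ⟨(Real.cos θ : ℂ), (Real.sin θ : ℂ), 0, 0⟩

/-- The structural set `ψ^θ = {i, i e^{iθ} j, e^{iθ} j}`. -/
def ψC (θ : ℝ) : Fin 3 → Quaternion ℂ := ![iC, iC * eC θ * jC, eC θ * jC]

/-- Partial derivative `∂ₘ` of a complex-valued function on `ℝ³`. -/
def pd (m : Fin 3) (g : (Fin 3 → ℝ) → ℂ) (x : Fin 3 → ℝ) : ℂ :=
  fderiv ℝ g x (Pi.single m 1)

/-- Componentwise partial derivative `∂ₘ` of an `ℍ(ℂ)`-valued function on `ℝ³`. -/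
def qpd (m : Fin 3) (f : (Fin 3 → ℝ) → Quaternion ℂ) (x : Fin 3 → ℝ) : Quaternion ℂ :=
  ⟨pd m (fun y => (f y).re) x, pd m (fun y => (f y).imI) x,
   pd m (fun y => (f y).imJ) x, pd m (fun y => (f y).imK) x⟩

/-- The left generalized Cauchy–Riemann operator `ψ^θD`. -/
def DL (θ : ℝ) (f : (Fin 3 → ℝ) → Quaternion ℂ) (x : Fin 3 → ℝ) : Quaternion ℂ :=
  ψC θ 0 * qpd 0 f x + ψC θ 1 * qpd 1 f x + ψC θ 2 * qpd 2 f x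

/-- The right generalized Cauchy–Riemann operator `Dψ^θ`. -/
def DR (θ : ℝ) (f : (Fin 3 → ℝ) → Quaternion ℂ) (x : Fin 3 → ℝ) : Quaternion ℂ :=
  qpd 0 f x * ψC θ 0 + qpd 1 f x * ψC θ 1 + qpd 2 f x * ψC θ 2

/-- The generalized Laplacian system (1)–(4) for the vector field `(f₁, f₂, f₃)` at `x`
(here `∂₁ = pd 0`, `∂₂ = pd 1`, `∂₃ = pd 2`). -/
def GLsys (θ : ℝ) (f₁ f₂ f₃ : (Fin 3 → ℝ) → ℂ) (x : Fin 3 → ℝ) : Prop :=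
  (-pd 0 f₁ x + (pd 1 f₂ x - pd 2 f₃ x) * (Real.sin θ : ℂ)
      - (pd 1 f₃ x + pd 2 f₂ x) * (Real.cos θ : ℂ) = 0) ∧
  ((pd 2 f₃ x - pd 1 f₂ x) * (Real.cos θ : ℂ)
      - (pd 1 f₃ x + pd 2 f₂ x) * (Real.sin θ : ℂ) = 0) ∧
  (-pd 0 f₃ x + pd 2 f₁ x * (Real.sin θ : ℂ) + pd 1 f₁ x * (Real.cos θ : ℂ) = 0) ∧
  (pd 0 f₂ x - pd 2 f₁ x * (Real.cos θ : ℂ) + pd 1 f₁ x * (Real.sin θ : ℂ) = 0)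

/-!
Every element of `ψ^θ` is a pure quaternion, and so is every partial derivative of a vector
field. For pure quaternions `p, q` one has `q p = conj (p q)`, hence `Dψ^θ[f] = conj (ψ^θD[f])`
and the two equations are equivalent. Expanding `ψ^θD[f]` into its four components gives
exactly the generalized Laplacian system.
-/

theorem Quaternion.star_mul_eq_mul_of_re_eq_zero {R : Type*} [CommRing R] {p q : Quaternion R}
    (hp : p.re = 0) (hq : q.re = 0) : star (p * q) = q * p := by
  have star_of_re_eq_zero : ∀ a : Quaternion R, a.re = 0 → star a = -a := fun a ha => by
    ext <;> simp [ha]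
  rw [star_mul, star_of_re_eq_zero p hp, star_of_re_eq_zero q hq, neg_mul_neg]

lemma ψC_zero (θ : ℝ) : ψC θ 0 = ⟨0, 1, 0, 0⟩ := rfl

lemma ψC_one (θ : ℝ) : ψC θ 1 = ⟨0, 0, -(Real.sin θ : ℂ), (Real.cos θ : ℂ)⟩ := by
  ext <;> simp [ψC, Quaternion.re_mul, Quaternion.imI_mul, Quaternion.imJ_mul, Quaternion.imK_mul]
    <;> simp [iC, jC, eC]

lemma ψC_two (θ : ℝ) : ψC θ 2 = ⟨0, 0, (Real.cos θ : ℂ), (Real.sin θ : ℂ)⟩ := by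
  ext <;> simp [ψC, Quaternion.re_mul, Quaternion.imI_mul, Quaternion.imJ_mul, Quaternion.imK_mul]
    <;> simp [jC, eC]

lemma ψC_re (θ : ℝ) (m : Fin 3) : (ψC θ m).re = 0 := by
  fin_cases m <;> simp [ψC_one, ψC_two]; rfl

lemma qpd_re_of_re_eq_zero {f : (Fin 3 → ℝ) → Quaternion ℂ} (hf : ∀ y, (f y).re = 0)
    (m : Fin 3) (x : Fin 3 → ℝ) : (qpd m f x).re = 0 := by
  simp [qpd, pd, hf]

lemma DR_eq_star_DL (θ : ℝ) {f : (Fin 3 → ℝ) → Quaternion ℂ} (hf : ∀ y, (f y).re = 0)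
    (x : Fin 3 → ℝ) : DR θ f x = star (DL θ f x) := by
  simp only [DR, DL, star_add (R := Quaternion ℂ),
    Quaternion.star_mul_eq_mul_of_re_eq_zero (ψC_re θ _) (qpd_re_of_re_eq_zero hf _ x)]

lemma DR_eq_zero_iff_DL_eq_zero (θ : ℝ) {f : (Fin 3 → ℝ) → Quaternion ℂ}
    (hf : ∀ y, (f y).re = 0) (x : Fin 3 → ℝ) : DR θ f x = 0 ↔ DL θ f x = 0 := by
  rw [DR_eq_star_DL θ hf, star_eq_zero (R := Quaternion ℂ)]

lemma qpd_vectorField (m : Fin 3) (f₁ f₂ f₃ : (Fin 3 → ℝ) → ℂ) (x : Fin 3 → ℝ) :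
    qpd m (fun y => (⟨0, f₁ y, f₂ y, f₃ y⟩ : Quaternion ℂ)) x
      = ⟨0, pd m f₁ x, pd m f₂ x, pd m f₃ x⟩ :=
  QuaternionAlgebra.ext (qpd_re_of_re_eq_zero (fun _ => rfl) m x) rfl rfl rfl

lemma DL_vectorField (θ : ℝ) (f₁ f₂ f₃ : (Fin 3 → ℝ) → ℂ) (x : Fin 3 → ℝ) :
    DL θ (fun y => (⟨0, f₁ y, f₂ y, f₃ y⟩ : Quaternion ℂ)) x
      = ⟨-pd 0 f₁ x + (pd 1 f₂ x - pd 2 f₃ x) * (Real.sin θ : ℂ)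
            - (pd 1 f₃ x + pd 2 f₂ x) * (Real.cos θ : ℂ),
         (pd 2 f₃ x - pd 1 f₂ x) * (Real.cos θ : ℂ)
            - (pd 1 f₃ x + pd 2 f₂ x) * (Real.sin θ : ℂ),
         -pd 0 f₃ x + pd 2 f₁ x * (Real.sin θ : ℂ) + pd 1 f₁ x * (Real.cos θ : ℂ),
         pd 0 f₂ x - pd 2 f₁ x * (Real.cos θ : ℂ) + pd 1 f₁ x * (Real.sin θ : ℂ)⟩ := by
  ext <;>
    simp only [DL, Quaternion.re_add, Quaternion.imI_add, Quaternion.imJ_add, Quaternion.imK_add,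
      Quaternion.re_mul, Quaternion.imI_mul, Quaternion.imJ_mul, Quaternion.imK_mul] <;>
    simp [ψC_zero, ψC_one, ψC_two, qpd_vectorField] <;> ring

lemma DL_vectorField_eq_zero_iff (θ : ℝ) (f₁ f₂ f₃ : (Fin 3 → ℝ) → ℂ) (x : Fin 3 → ℝ) :
    DL θ (fun y => (⟨0, f₁ y, f₂ y, f₃ y⟩ : Quaternion ℂ)) x = 0 ↔ GLsys θ f₁ f₂ f₃ x := by
  rw [DL_vectorField]
  exact Quaternion.ext_iff

theorem stmt_13_general (θ : ℝ) (Ω : Set (Fin 3 → ℝ))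
    (f₁ f₂ f₃ : (Fin 3 → ℝ) → ℂ) :
    ∀ x ∈ Ω,
      (DR θ (fun y => (⟨0, f₁ y, f₂ y, f₃ y⟩ : Quaternion ℂ)) x = 0 ↔
        DL θ (fun y => (⟨0, f₁ y, f₂ y, f₃ y⟩ : Quaternion ℂ)) x = 0) ∧
      (DL θ (fun y => (⟨0, f₁ y, f₂ y, f₃ y⟩ : Quaternion ℂ)) x = 0 ↔
        GLsys θ f₁ f₂ f₃ x) := by
  intro x _
  exact ⟨DR_eq_zero_iff_DL_eq_zero θ (fun _ => rfl) x, DL_vectorField_eq_zero_iff θ f₁ f₂ f₃ x⟩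

/-- For a `C¹` purely vectorial `f = f₁i + f₂j + f₃k`, the right equation `Dψ^θ[f] = 0`
holds iff the left equation `ψ^θD[f] = 0` holds, both being equivalent to the
generalized Laplacian system. -/
theorem stmt_13 (θ : ℝ) (Ω : Set (Fin 3 → ℝ)) (hΩ : IsOpen Ω)
    (f₁ f₂ f₃ : (Fin 3 → ℝ) → ℂ)
    (h1 : ContDiffOn ℝ 1 f₁ Ω) (h2 : ContDiffOn ℝ 1 f₂ Ω) (h3 : ContDiffOn ℝ 1 f₃ Ω) :
    ∀ x ∈ Ω,
      (DR θ (fun y => (⟨0, f₁ y, f₂ y, f₃ y⟩ : Quaternion ℂ)) x = 0 ↔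
        DL θ (fun y => (⟨0, f₁ y, f₂ y, f₃ y⟩ : Quaternion ℂ)) x = 0) ∧
      (DL θ (fun y => (⟨0, f₁ y, f₂ y, f₃ y⟩ : Quaternion ℂ)) x = 0 ↔
        GLsys θ f₁ f₂ f₃ x) :=
  stmt_13_general θ Ω f₁ f₂ f₃
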